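/- For any convex polytope P and any faces F′ ≤ F of P, g(P,F) = Σ_{F′ ≤ E ≤ P} g(E,F′)·g(P/E, (E∨F)/E), where the sum runs over all faces E of P containing F′, E∨F is the smallest face of P containing both E and F, and (E∨F)/E denotes the face of the quotient polytope P/E corresponding to E∨F under the isomorphism of the face poset of P/E with the interval [E,P]. -/

import Mathlib

open Polynomial
open scoped Classical

noncomputable section

/-- `P ⊆ ℝ^d` is a (convex) polytope: the convex hull of a finite set of points. -/
def IsPolytope {d : ℕ} (P : Set (Fin d → ℝ)) : Prop :=
  ∃ S : Finset (Fin d → ℝ), P = convexHull ℝ (S : Set (Fin d → ℝ))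

/-- `F` is a face of `P`: the empty set, `P` itself, or the intersection of `P`
with a supporting hyperplane. -/
def IsFace {d : ℕ} (P F : Set (Fin d → ℝ)) : Prop :=
  F = ∅ ∨ F = P ∨ ∃ (f : (Fin d → ℝ) →ₗ[ℝ] ℝ) (c : ℝ),
    (∀ x ∈ P, f x ≤ c) ∧ F = {x ∈ P | f x = c}

/-- Affine dimension of a subset of `ℝ^d`, with `pdim ∅ = -1`. -/
def pdim {d : ℕ} (P : Set (Fin d → ℝ)) : ℤ :=
  if P = ∅ then -1 else (Module.finrank ℝ (affineSpan ℝ P).direction : ℤ)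

/-- The pair of functions `g`, `h` satisfies the defining recursion of the
`g`- and `h`-polynomials of polytopes. -/
def IsGH {d : ℕ} (g h : Set (Fin d → ℝ) → Polynomial ℤ) : Prop :=
  g ∅ = 1 ∧
  (∀ P : Set (Fin d → ℝ), IsPolytope P →
      h P = ∑ᶠ F ∈ {F : Set (Fin d → ℝ) | IsFace P F ∧ F ≠ P},
        (X - 1 : Polynomial ℤ) ^ (pdim P - pdim F - 1).toNat * g F) ∧
  (∀ P : Set (Fin d → ℝ), IsPolytope P → P ≠ ∅ →
      (g P).coeff 0 = (h P).coeff 0 ∧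
      (∀ i : ℕ, 0 < i → 2 * (i : ℤ) ≤ pdim P →
        (g P).coeff i = (h P).coeff i - (h P).coeff (i - 1)) ∧
      (∀ i : ℕ, 0 < i → ¬(2 * (i : ℤ) ≤ pdim P) → (g P).coeff i = 0))

/-- `Q` is (a combinatorial model of) the quotient polytope `P/E`, with `ψ` an
explicit isomorphism from the interval `[E, P]` in the face poset of `P` to the
face poset of `Q`. -/
def IsQuotientPair {d : ℕ} (P E Q : Set (Fin d → ℝ))
    (ψ : Set (Fin d → ℝ) → Set (Fin d → ℝ)) : Prop :=
  IsPolytope Q ∧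
  Set.BijOn ψ {G : Set (Fin d → ℝ) | IsFace P G ∧ E ⊆ G} {G : Set (Fin d → ℝ) | IsFace Q G} ∧
  ∀ G₁ ∈ {G : Set (Fin d → ℝ) | IsFace P G ∧ E ⊆ G},
    ∀ G₂ ∈ {G : Set (Fin d → ℝ) | IsFace P G ∧ E ⊆ G}, (G₁ ⊆ G₂ ↔ ψ G₁ ⊆ ψ G₂)

/-- The family `gr` of relative `g`-polynomials satisfies the defining relation
`∑_{F ≤ E ≤ P} g(E,F) g(P/E) = g(P)` (where `g(P/P) = 1`, the quotient by `P`
itself being the empty polytope). -/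
def IsRelG {d : ℕ} (g : Set (Fin d → ℝ) → Polynomial ℤ)
    (gr : Set (Fin d → ℝ) → Set (Fin d → ℝ) → Polynomial ℤ) : Prop :=
  ∀ (P F : Set (Fin d → ℝ)) (Q : Set (Fin d → ℝ) → Set (Fin d → ℝ))
    (ψ : Set (Fin d → ℝ) → Set (Fin d → ℝ) → Set (Fin d → ℝ)),
    IsPolytope P → IsFace P F →
    (∀ E, IsFace P E → F ⊆ E → IsQuotientPair P E (Q E) (ψ E)) →
    (∑ᶠ E ∈ {E : Set (Fin d → ℝ) | IsFace P E ∧ F ⊆ E}, gr E F * g (Q E)) = g P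

/-- A rational polytope: the convex hull of finitely many points with rational
coordinates. -/
def IsRationalPolytope {d : ℕ} (P : Set (Fin d → ℝ)) : Prop :=
  ∃ S : Finset (Fin d → ℝ), (∀ v ∈ S, ∀ i : Fin d, ∃ q : ℚ, v i = (q : ℝ)) ∧
    P = convexHull ℝ (S : Set (Fin d → ℝ))

/-- `E ∨ F`: the smallest face of `P` containing both `E` and `F` (as the
intersection of all faces of `P` containing them). -/
def polyJoin {d : ℕ} (P E F : Set (Fin d → ℝ)) : Set (Fin d → ℝ) :=
  ⋂₀ {G : Set (Fin d → ℝ) | IsFace P G ∧ E ⊆ G ∧ F ⊆ G}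

/-!
For a face `G ⊇ F` of `P` let `D(G) = ∑_{F′ ≤ E ≤ G} g(E,F′)·g(G/E, (E∨F)/E)`. Exchanging the order
of summation in `∑_{F ≤ G ≤ P} D(G)·g(P/G)` and applying the defining relation of the relative
`g`-polynomial to the quotient `P/E` and its face `(E∨F)/E` turns it into
`∑_{F′ ≤ E ≤ P} g(E,F′)·g(P/E) = g(P)`. So `D` satisfies, on every face `G ⊇ F`, the same relation
as `g(·,F)`; since `g(G/G) = g(∅) = 1` this system is unitriangular, and `D(G) = g(G,F)` follows
by induction on `G`.
-/

open Filter Topology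

theorem convex_sep_apply_eq {V : Type*} [AddCommGroup V] [Module ℝ V] {A : Set V}
    (hA : Convex ℝ A) (ℓ : V →ₗ[ℝ] ℝ) (c : ℝ) : Convex ℝ {x ∈ A | ℓ x = c} :=
  hA.inter (convex_hyperplane ℓ.isLinear c)

theorem sep_convexHull_subset_of_forall_vertex {V : Type*} [AddCommGroup V] [Module ℝ V]
    {S : Finset V} {ℓ : V →ₗ[ℝ] ℝ} {c : ℝ} (hS : ∀ v ∈ S, ℓ v ≤ c) {K : Set V}
    (hK : Convex ℝ K) (hSK : ∀ v ∈ S, ℓ v = c → v ∈ K) :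
    {x ∈ convexHull ℝ (S : Set V) | ℓ x = c} ⊆ K := by
  rintro _ ⟨hx, hxc⟩
  obtain ⟨w, hw₀, hw₁, rfl⟩ := Finset.mem_convexHull'.1 hx
  have hslack : ∑ v ∈ S, w v * (c - ℓ v) = 0 := by
    simp only [mul_sub, Finset.sum_sub_distrib, ← Finset.sum_mul, hw₁, one_mul, ← hxc, map_sum,
      map_smul, smul_eq_mul, sub_self]
  have hw : ∀ v ∈ S, w v ≠ 0 → ℓ v = c := fun v hv hwv => by
    have := (Finset.sum_eq_zero_iff_of_nonneg fun v hv =>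
      mul_nonneg (hw₀ v hv) (sub_nonneg.2 (hS v hv))).1 hslack v hv
    linarith [(mul_eq_zero.1 this).resolve_left hwv]
  rw [← Finset.sum_filter_of_ne fun v hv h => hw v hv (left_ne_zero_of_smul h)]
  refine hK.sum_mem (fun v hv => hw₀ v (Finset.mem_filter.1 hv).1) ?_
    fun v hv => hSK v (Finset.mem_filter.1 hv).1 (Finset.mem_filter.1 hv).2
  rwa [Finset.sum_filter_of_ne hw]

section Faces

variable {d : ℕ} {P E F G H K : Set (Fin d → ℝ)}

theorem isFace_empty (P : Set (Fin d → ℝ)) : IsFace P ∅ := Or.inl rfl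

theorem isFace_self (P : Set (Fin d → ℝ)) : IsFace P P := Or.inr (Or.inl rfl)

theorem IsFace.subset (hF : IsFace P F) : F ⊆ P := by
  rcases hF with rfl | rfl | ⟨f, c, -, rfl⟩
  · exact Set.empty_subset P
  · exact subset_rfl
  · exact Set.sep_subset P _

theorem IsFace.exists_subset_eq_convexHull {S : Finset (Fin d → ℝ)}
    (hF : IsFace (convexHull ℝ (S : Set (Fin d → ℝ))) F) :
    ∃ T ⊆ S, F = convexHull ℝ (T : Set (Fin d → ℝ)) := by
  rcases hF with rfl | rfl | ⟨f, c, hfc, rfl⟩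
  · exact ⟨∅, Finset.empty_subset S, by simp⟩
  · exact ⟨S, subset_rfl, rfl⟩
  · refine ⟨S.filter (f · = c), Finset.filter_subset _ S, subset_antisymm ?_ ?_⟩
    · exact sep_convexHull_subset_of_forall_vertex
        (fun v hv => hfc v (subset_convexHull ℝ _ hv)) (convex_convexHull ℝ _)
        fun v hv hvc => subset_convexHull ℝ _ (by simpa using ⟨hv, hvc⟩)
    · refine convexHull_min (fun v hv => ?_) (convex_sep_apply_eq (convex_convexHull ℝ _) f c)
      simp only [Finset.coe_filter] at hv
      exact ⟨subset_convexHull ℝ _ hv.1, hv.2⟩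

theorem IsPolytope.finite_faces (hP : IsPolytope P) : {F | IsFace P F}.Finite := by
  obtain ⟨S, rfl⟩ := hP
  refine (S.powerset.finite_toSet.image fun T : Finset _ =>
    convexHull ℝ (T : Set (Fin d → ℝ))).subset fun F hF => ?_
  obtain ⟨T, hTS, rfl⟩ := IsFace.exists_subset_eq_convexHull hF
  exact ⟨T, by simpa using hTS, rfl⟩

theorem IsFace.isPolytope (hP : IsPolytope P) (hF : IsFace P F) : IsPolytope F := by
  obtain ⟨S, rfl⟩ := hP
  obtain ⟨T, -, hFT⟩ := hF.exists_subset_eq_convexHull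
  exact ⟨T, hFT⟩

/-- Faces of faces are faces: if `H = P ∩ {f = b}` and `K = H ∩ {g = c}`, then
`K = P ∩ {f + ε g = b + ε c}` for small `ε > 0`, small enough that the vertices of `P` off `H`
stay strictly below the new bound. -/
theorem IsFace.trans (hP : IsPolytope P) (hH : IsFace P H) (hK : IsFace H K) : IsFace P K := by
  rcases hK with rfl | rfl | ⟨g, c, hgc, rfl⟩
  · exact isFace_empty P
  · exact hH
  rcases hH with rfl | rfl | ⟨f, b, hfb, rfl⟩
  · simpa using isFace_empty P
  · exact Or.inr (Or.inr ⟨g, c, hgc, rfl⟩)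
  obtain ⟨S, rfl⟩ := hP
  have hsmall : ∀ᶠ ε in 𝓝[>] (0 : ℝ), 0 < ε ∧ ∀ v ∈ S, f v < b → f v + ε * (g v - c) < b := by
    refine eventually_mem_nhdsWithin.and (nhdsWithin_le_nhds ?_)
    refine (Filter.eventually_all_finset S).2 fun v _ => ?_
    by_cases hv : f v < b
    · have : Tendsto (fun ε : ℝ => f v + ε * (g v - c)) (𝓝 0) (𝓝 (f v)) :=
        Continuous.tendsto' (by fun_prop) _ _ (by simp)
      exact (this.eventually (gt_mem_nhds hv)).mono fun _ h _ => h
    · exact Filter.Eventually.of_forall fun _ h => absurd h hv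
  obtain ⟨ε, hε, hεS⟩ := hsmall.exists
  have hφ : ∀ x, (f + ε • g) x = f x + ε * g x := fun x => rfl
  have hvertex : ∀ v ∈ S, (f + ε • g) v ≤ b + ε * c ∧
      ((f + ε • g) v = b + ε * c → f v = b ∧ g v = c) := by
    intro v hv
    have hvP := subset_convexHull ℝ (S : Set (Fin d → ℝ)) hv
    rcases (hfb v hvP).lt_or_eq with hlt | heq
    · have := hεS v hv hlt
      refine ⟨by rw [hφ]; linarith, fun h => by rw [hφ] at h; linarith⟩
    · have := hgc v ⟨hvP, heq⟩
      refine ⟨by rw [hφ]; nlinarith, fun h => ⟨heq, ?_⟩⟩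
      rw [hφ, heq] at h
      exact mul_left_cancel₀ hε.ne' (by linarith)
  have hbound : ∀ x ∈ convexHull ℝ (S : Set (Fin d → ℝ)), (f + ε • g) x ≤ b + ε * c :=
    fun x hx => convexHull_min (fun v hv => (hvertex v hv).1)
      (convex_halfSpace_le (f + ε • g).isLinear _) hx
  refine Or.inr (Or.inr ⟨f + ε • g, b + ε * c, hbound, subset_antisymm ?_ ?_⟩)
  · rintro x ⟨⟨hxP, hfx⟩, hgx⟩
    exact ⟨hxP, by rw [hφ, hfx, hgx]⟩
  · refine sep_convexHull_subset_of_forall_vertex (fun v hv => (hvertex v hv).1)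
      (convex_sep_apply_eq (convex_sep_apply_eq (convex_convexHull ℝ _) f b) g c) ?_
    intro v hv hφv
    obtain ⟨hfv, hgv⟩ := (hvertex v hv).2 hφv
    exact ⟨⟨subset_convexHull ℝ _ hv, hfv⟩, hgv⟩

theorem IsFace.of_subset (hH : IsFace P H) (hK : IsFace P K) (hKH : K ⊆ H) : IsFace H K := by
  rcases hK with rfl | rfl | ⟨f, c, hfc, rfl⟩
  · exact isFace_empty H
  · exact Or.inr (Or.inl (subset_antisymm hKH hH.subset))
  · refine Or.inr (Or.inr ⟨f, c, fun x hx => hfc x (hH.subset hx), subset_antisymm ?_ ?_⟩)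
    · exact fun x hx => ⟨hKH hx, hx.2⟩
    · exact fun x hx => ⟨hH.subset hx.1, hx.2⟩

theorem IsFace.isFace_iff (hP : IsPolytope P) (hG : IsFace P G) :
    IsFace G K ↔ IsFace P K ∧ K ⊆ G :=
  ⟨fun hK => ⟨hG.trans hP hK, hK.subset⟩, fun hK => hG.of_subset hK.1 hK.2⟩

theorem IsFace.setOf_isFace (hP : IsPolytope P) (hG : IsFace P G) :
    {K | IsFace G K} = {K | IsFace P K} ∩ Set.Iic G :=
  Set.ext fun _ => hG.isFace_iff hP

theorem IsFace.inter (hE : IsFace P E) (hF : IsFace P F) : IsFace P (E ∩ F) := by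
  rcases hE with rfl | rfl | ⟨f, b, hfb, rfl⟩
  · simpa using isFace_empty P
  · rwa [Set.inter_eq_self_of_subset_right hF.subset]
  rcases hF with rfl | rfl | ⟨g, c, hgc, rfl⟩
  · simpa using isFace_empty P
  · rw [Set.inter_eq_self_of_subset_left (Set.sep_subset _ _)]
    exact Or.inr (Or.inr ⟨f, b, hfb, rfl⟩)
  refine Or.inr (Or.inr ⟨f + g, b + c, fun x hx => add_le_add (hfb x hx) (hgc x hx), ?_⟩)
  ext x
  simp only [Set.mem_inter_iff, Set.mem_sep_iff, LinearMap.add_apply]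
  constructor
  · rintro ⟨⟨hxP, hfx⟩, -, hgx⟩
    exact ⟨hxP, by rw [hfx, hgx]⟩
  · rintro ⟨hxP, hx⟩
    have := hfb x hxP
    have := hgc x hxP
    exact ⟨⟨hxP, by linarith⟩, hxP, by linarith⟩

theorem isFace_sInter (hP : IsPolytope P) {𝒮 : Set (Set (Fin d → ℝ))}
    (h𝒮 : ∀ A ∈ 𝒮, IsFace P A) (hne : 𝒮.Nonempty) : IsFace P (⋂₀ 𝒮) := by
  induction 𝒮, hP.finite_faces.subset h𝒮 using Set.Finite.induction_on with
  | empty => exact absurd hne Set.not_nonempty_empty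
  | @insert A 𝒮 _ _ ih =>
    rw [Set.sInter_insert]
    rcases 𝒮.eq_empty_or_nonempty with rfl | h𝒮ne
    · simpa using h𝒮 A (Set.mem_insert A ∅)
    · exact (h𝒮 A (Set.mem_insert A 𝒮)).inter
        (ih (fun B hB => h𝒮 B (Set.mem_insert_of_mem A hB)) h𝒮ne)

theorem isFace_polyJoin (hP : IsPolytope P) (hE : E ⊆ P) (hF : F ⊆ P) :
    IsFace P (polyJoin P E F) :=
  isFace_sInter hP (fun _ hA => hA.1) ⟨P, isFace_self P, hE, hF⟩

theorem subset_polyJoin_left : E ⊆ polyJoin P E F :=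
  Set.subset_sInter fun _ hG => hG.2.1

theorem polyJoin_subset_iff (hG : IsFace P G) : polyJoin P E F ⊆ G ↔ E ⊆ G ∧ F ⊆ G :=
  ⟨fun h => ⟨subset_polyJoin_left.trans h, (Set.subset_sInter fun _ hG => hG.2.2).trans h⟩,
    fun h => Set.sInter_subset_of_mem ⟨hG, h⟩⟩

end Faces

section OrderBijOn

variable {α β γ : Type*} [Preorder α] [Preorder β] [Preorder γ]

def OrderBijOn (f : α → β) (s : Set α) (t : Set β) : Prop :=
  Set.BijOn f s t ∧ ∀ a ∈ s, ∀ b ∈ s, (a ≤ b ↔ f a ≤ f b)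

variable {f : α → β} {s : Set α} {t : Set β} {a : α}

theorem OrderBijOn.comp {g : β → γ} {u : Set γ} (hg : OrderBijOn g t u)
    (hf : OrderBijOn f s t) : OrderBijOn (g ∘ f) s u :=
  ⟨hg.1.comp hf.1, fun a ha b hb =>
    (hf.2 a ha b hb).trans (hg.2 _ (hf.1.mapsTo ha) _ (hf.1.mapsTo hb))⟩

theorem OrderBijOn.invFunOn [Nonempty α] (h : OrderBijOn f s t) :
    OrderBijOn (Function.invFunOn f s) t s := by
  have hinv := h.1.invOn_invFunOn
  refine ⟨h.1.symm hinv.symm, fun x hx y hy => ?_⟩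
  have hmaps := h.1.surjOn.mapsTo_invFunOn
  rw [h.2 _ (hmaps hx) _ (hmaps hy), hinv.2 hx, hinv.2 hy]

theorem OrderBijOn.inter_of_iff {s' : Set α} {t' : Set β} (h : OrderBijOn f s t)
    (hst : ∀ x ∈ s, x ∈ s' ↔ f x ∈ t') : OrderBijOn f (s ∩ s') (t ∩ t') := by
  refine ⟨⟨fun x hx => ⟨h.1.mapsTo hx.1, (hst x hx.1).1 hx.2⟩,
    h.1.injOn.mono Set.inter_subset_left, ?_⟩, fun x hx y hy => h.2 x hx.1 y hy.1⟩
  rintro _ ⟨hy, hy'⟩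
  obtain ⟨x, hx, rfl⟩ := h.1.surjOn hy
  exact ⟨x, ⟨hx, (hst x hx).2 hy'⟩, rfl⟩

theorem OrderBijOn.inter_Iic (h : OrderBijOn f s t) (ha : a ∈ s) :
    OrderBijOn f (s ∩ Set.Iic a) (t ∩ Set.Iic (f a)) :=
  h.inter_of_iff fun x hx => h.2 x hx a ha

theorem OrderBijOn.inter_Ici (h : OrderBijOn f s t) (ha : a ∈ s) :
    OrderBijOn f (s ∩ Set.Ici a) (t ∩ Set.Ici (f a)) :=
  h.inter_of_iff fun x hx => h.2 a ha x hx

theorem OrderBijOn.map_isLeast (h : OrderBijOn f s t) (ha : IsLeast s a) : IsLeast t (f a) := by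
  refine ⟨h.1.mapsTo ha.1, fun _ hy => ?_⟩
  obtain ⟨x, hx, rfl⟩ := h.1.surjOn hy
  exact (h.2 a ha.1 x hx).1 (ha.2 hx)

theorem OrderBijOn.map_isGreatest (h : OrderBijOn f s t) (ha : IsGreatest s a) :
    IsGreatest t (f a) := by
  refine ⟨h.1.mapsTo ha.1, fun _ hy => ?_⟩
  obtain ⟨x, hx, rfl⟩ := h.1.surjOn hy
  exact (h.2 x hx a ha.1).1 (ha.2 hx)

end OrderBijOn

section Quotients

variable {d : ℕ} {P E G M Q Q' : Set (Fin d → ℝ)} {ψ ψ' : Set (Fin d → ℝ) → Set (Fin d → ℝ)}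

theorem isQuotientPair_iff : IsQuotientPair P E Q ψ ↔
    IsPolytope Q ∧ OrderBijOn ψ ({K | IsFace P K} ∩ Set.Ici E) {K | IsFace Q K} :=
  Iff.rfl

theorem IsQuotientPair.map_self (h : IsQuotientPair P E Q ψ) (hE : IsFace P E) : ψ E = ∅ :=
  ((isQuotientPair_iff.1 h).2.map_isLeast ⟨⟨hE, Set.self_mem_Ici⟩, fun _ hK => hK.2⟩).unique
    ⟨isFace_empty Q, fun _ _ => Set.empty_subset _⟩

theorem IsQuotientPair.map_top (h : IsQuotientPair P E Q ψ) (hE : E ⊆ P) : ψ P = Q :=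
  ((isQuotientPair_iff.1 h).2.map_isGreatest ⟨⟨isFace_self P, hE⟩, fun _ hK => hK.1.subset⟩).unique
    ⟨isFace_self Q, fun _ hK => hK.subset⟩

theorem IsQuotientPair.restrict (h : IsQuotientPair P E Q ψ) (hP : IsPolytope P)
    (hG : IsFace P G) (hEG : E ⊆ G) : IsQuotientPair G E (ψ G) ψ := by
  rw [isQuotientPair_iff] at h ⊢
  have hψG : IsFace Q (ψ G) := h.2.1.mapsTo ⟨hG, hEG⟩
  refine ⟨hψG.isPolytope h.1, ?_⟩
  rw [hG.setOf_isFace hP, hψG.setOf_isFace h.1, Set.inter_right_comm]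
  exact h.2.inter_Iic ⟨hG, hEG⟩

/-- With `ψ G` standing for `G/E`, this is `(G/E)/(M/E) = G/M`. -/
theorem IsQuotientPair.quotient (hE : IsQuotientPair P E Q ψ) (hM : IsQuotientPair P M Q' ψ')
    (hP : IsPolytope P) (hMface : IsFace P M) (hEM : E ⊆ M) (hG : IsFace P G) (hMG : M ⊆ G) :
    IsQuotientPair (ψ G) (ψ M) (ψ' G)
      (ψ' ∘ Function.invFunOn ψ ({K | IsFace P K} ∩ Set.Ici E)) := by
  rw [isQuotientPair_iff] at hE ⊢
  set e := Function.invFunOn ψ ({K | IsFace P K} ∩ Set.Ici E)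
  have hGmem : G ∈ {K | IsFace P K} ∩ Set.Ici E := ⟨hG, hEM.trans hMG⟩
  have hMmem : M ∈ {K | IsFace P K} ∩ Set.Ici E := ⟨hMface, hEM⟩
  have hψG : IsFace Q (ψ G) := hE.2.1.mapsTo hGmem
  have hinv := hE.2.1.invOn_invFunOn
  have he := (hE.2.invFunOn.inter_Iic hψG).inter_Ici
    ⟨hE.2.1.mapsTo hMmem, (hE.2.2 M hMmem G hGmem).1 hMG⟩
  have hinterval : {K | IsFace P K} ∩ Set.Ici E ∩ Set.Iic G ∩ Set.Ici M =
      {K | IsFace P K} ∩ Set.Iic G ∩ Set.Ici M := by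
    ext K
    simp only [Set.mem_inter_iff, Set.mem_Ici, Set.mem_Iic]
    exact ⟨fun ⟨⟨⟨hK, _⟩, hKG⟩, hMK⟩ => ⟨⟨hK, hKG⟩, hMK⟩,
      fun ⟨⟨hK, hKG⟩, hMK⟩ => ⟨⟨⟨hK, hEM.trans hMK⟩, hKG⟩, hMK⟩⟩
  rw [hinv.1 hGmem, hinv.1 hMmem, hinterval, ← hG.setOf_isFace hP] at he
  rw [hψG.setOf_isFace hE.1]
  have hMG := isQuotientPair_iff.1 (hM.restrict hP hG hMG)
  exact ⟨hMG.1, hMG.2.comp he⟩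

end Quotients

theorem Finset.eq_of_sum_mul_unitriangular_eq {α R : Type*} [PartialOrder α] [DecidableLE α]
    [Ring R] {s : Finset α} {a b : α → R} (u : α → α → R) (hu : ∀ y ∈ s, u y y = 1)
    (h : ∀ y ∈ s, ∑ x ∈ s with x ≤ y, a x * u x y = ∑ x ∈ s with x ≤ y, b x * u x y) :
    ∀ y ∈ s, a y = b y := by
  intro y hy
  refine (s.finite_toSet.wellFoundedOn (r := (· < ·))).induction hy
    (P := fun y => a y = b y) fun y hy ih => ?_
  have hsum : ∑ x ∈ s with x ≤ y, (a x - b x) * u x y = 0 := by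
    simp only [sub_mul, Finset.sum_sub_distrib, h y hy, sub_self]
  rw [Finset.sum_eq_single_of_mem (s := s.filter (· ≤ y)) y (Finset.mem_filter.2 ⟨hy, le_rfl⟩)
    fun x hx hxy => ?_] at hsum
  · simpa [hu y hy, sub_eq_zero] using hsum
  · rw [Finset.mem_filter] at hx
    rw [ih x hx.1 (lt_of_le_of_ne hx.2 hxy), sub_self, zero_mul]

section Relations

variable {d : ℕ} {g : Set (Fin d → ℝ) → Polynomial ℤ}
  {gr : Set (Fin d → ℝ) → Set (Fin d → ℝ) → Polynomial ℤ} {P E F F' W J G : Set (Fin d → ℝ)}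
  {Q : Set (Fin d → ℝ) → Set (Fin d → ℝ)}
  {ψ : Set (Fin d → ℝ) → Set (Fin d → ℝ) → Set (Fin d → ℝ)}

def IsPolytope.faces (hP : IsPolytope P) : Finset (Set (Fin d → ℝ)) :=
  hP.finite_faces.toFinset

theorem IsPolytope.mem_faces (hP : IsPolytope P) : G ∈ hP.faces ↔ IsFace P G :=
  Set.Finite.mem_toFinset _

theorem IsPolytope.finsum_mem_eq_sum_faces {R : Type*} [AddCommMonoid R] (hP : IsPolytope P)
    {s : Set (Set (Fin d → ℝ))} {p : Set (Fin d → ℝ) → Prop} [DecidablePred p]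
    (hs : ∀ K, K ∈ s ↔ IsFace P K ∧ p K)
    (φ : Set (Fin d → ℝ) → R) : ∑ᶠ K ∈ s, φ K = ∑ K ∈ hP.faces with p K, φ K := by
  have : s = ↑(hP.faces.filter p) := by
    ext K
    simp [hs, hP.mem_faces]
  rw [this, finsum_mem_coe_finset]

theorem IsRelG.sum_faces_face_eq (hgr : IsRelG g gr) (hP : IsPolytope P)
    (hQ : ∀ E, IsFace P E → W ⊆ E → IsQuotientPair P E (Q E) (ψ E)) (hG : IsFace P G)
    (hW : IsFace P W) (hWG : W ⊆ G) :
    ∑ E ∈ hP.faces with W ⊆ E ∧ E ⊆ G, gr E W * g (ψ E G) = g G := by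
  rw [← hgr G W (fun E => ψ E G) ψ (hG.isPolytope hP) (hG.of_subset hW hWG)
    fun E hE hWE => (hQ E (hG.trans hP hE) hWE).restrict hP hG hE.subset]
  refine (hP.finsum_mem_eq_sum_faces (s := {E | IsFace G E ∧ W ⊆ E})
    (p := fun E => W ⊆ E ∧ E ⊆ G) (fun K => ?_) fun E => gr E W * g (ψ E G)).symm
  show IsFace G K ∧ W ⊆ K ↔ _
  rw [hG.isFace_iff hP]
  tauto

/-- The defining relation of `g(G/E, J/E)`, reindexed by `G' ↦ G'/E`. -/
theorem IsRelG.sum_faces_quotient_eq (hgr : IsRelG g gr) (hP : IsPolytope P)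
    (hQ : ∀ M, IsFace P M → E ⊆ M → IsQuotientPair P M (Q M) (ψ M)) (hE : IsFace P E)
    (hJ : IsFace P J) (hEJ : E ⊆ J) (hG : IsFace P G) (hJG : J ⊆ G) :
    ∑ G' ∈ hP.faces with J ⊆ G' ∧ G' ⊆ G, gr (ψ E G') (ψ E J) * g (ψ G' G) = g (ψ E G) := by
  have hqE := isQuotientPair_iff.1 (hQ E hE subset_rfl)
  set e := Function.invFunOn (ψ E) ({K | IsFace P K} ∩ Set.Ici E)
  have he : ∀ M, IsFace P M → E ⊆ M → e (ψ E M) = M :=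
    fun M hM hEM => hqE.2.1.invOn_invFunOn.1 ⟨hM, hEM⟩
  have hqEG := hQ E hE subset_rfl |>.restrict hP hG (hEJ.trans hJG)
  have hbij := (isQuotientPair_iff.1 hqEG).2.inter_Ici ⟨hG.of_subset hJ hJG, hEJ⟩
  have hquot : ∀ K, IsFace (ψ E G) K → ψ E J ⊆ K →
      IsQuotientPair (ψ E G) K (ψ (e K) G) (ψ (e K) ∘ e) := by
    intro K hK hJK
    obtain ⟨M, ⟨⟨hM, hEM⟩, -⟩, rfl⟩ := hbij.1.surjOn ⟨hK, hJK⟩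
    have hMP := hG.trans hP hM
    rw [he M hMP hEM]
    exact (hQ E hE subset_rfl).quotient (hQ M hMP hEM) hP hMP hEM hG hM.subset
  calc ∑ G' ∈ hP.faces with J ⊆ G' ∧ G' ⊆ G, gr (ψ E G') (ψ E J) * g (ψ G' G)
      = ∑ᶠ M ∈ {K | IsFace G K} ∩ Set.Ici E ∩ Set.Ici J,
          gr (ψ E M) (ψ E J) * g (ψ M G) := by
        refine (hP.finsum_mem_eq_sum_faces (s := {K | IsFace G K} ∩ Set.Ici E ∩ Set.Ici J)
          (p := fun K => J ⊆ K ∧ K ⊆ G) (fun K => ?_)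
          fun M => gr (ψ E M) (ψ E J) * g (ψ M G)).symm
        simp only [Set.mem_inter_iff, Set.mem_ofPred_eq, Set.mem_Ici, hG.isFace_iff hP]
        exact ⟨fun ⟨⟨⟨hK, hKG⟩, _⟩, hJK⟩ => ⟨hK, hJK, hKG⟩,
          fun ⟨hK, hJK, hKG⟩ => ⟨⟨⟨hK, hKG⟩, hEJ.trans hJK⟩, hJK⟩⟩
    _ = ∑ᶠ K ∈ {K | IsFace (ψ E G) K} ∩ Set.Ici (ψ E J), gr K (ψ E J) * g (ψ (e K) G) :=
        finsum_mem_eq_of_bijOn _ hbij.1 fun M hM => by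
          rw [he M (hG.trans hP hM.1.1) hM.1.2]
    _ = g (ψ E G) :=
        hgr (ψ E G) (ψ E J) _ _ hqEG.1
          (hbij.1.mapsTo ⟨⟨hG.of_subset hJ hJG, hEJ⟩, Set.self_mem_Ici⟩).1 hquot

theorem IsRelG.sum_decomposition_mul_eq (hgr : IsRelG g gr) (hP : IsPolytope P)
    (hQ : ∀ E, IsFace P E → F' ⊆ E → IsQuotientPair P E (Q E) (ψ E)) (hF : IsFace P F)
    (hF' : IsFace P F') (hle : F' ⊆ F) (hG : IsFace P G) (hFG : F ⊆ G) :
    ∑ G' ∈ hP.faces with F ⊆ G' ∧ G' ⊆ G,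
      (∑ E ∈ hP.faces with F' ⊆ E ∧ E ⊆ G',
        gr E F' * gr (ψ E G') (ψ E (polyJoin P E F))) * g (ψ G' G) = g G := calc
  _ = ∑ E ∈ hP.faces with F' ⊆ E ∧ E ⊆ G, gr E F' *
        ∑ G' ∈ hP.faces with polyJoin P E F ⊆ G' ∧ G' ⊆ G,
          gr (ψ E G') (ψ E (polyJoin P E F)) * g (ψ G' G) := by
      simp only [Finset.sum_mul, Finset.mul_sum, mul_assoc]
      refine Finset.sum_comm' fun G' E => ?_
      simp only [Finset.mem_filter, hP.mem_faces]
      constructor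
      · rintro ⟨⟨hG', hFG', hG'G⟩, hE, hF'E, hEG'⟩
        exact ⟨⟨hG', (polyJoin_subset_iff hG').2 ⟨hEG', hFG'⟩, hG'G⟩, hE, hF'E, hEG'.trans hG'G⟩
      · rintro ⟨⟨hG', hJG', hG'G⟩, hE, hF'E, -⟩
        obtain ⟨hEG', hFG'⟩ := (polyJoin_subset_iff hG').1 hJG'
        exact ⟨⟨hG', hFG', hG'G⟩, hE, hF'E, hEG'⟩
  _ = ∑ E ∈ hP.faces with F' ⊆ E ∧ E ⊆ G, gr E F' * g (ψ E G) := by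
      refine Finset.sum_congr rfl fun E hE => ?_
      obtain ⟨hE, hF'E, hEG⟩ := (Finset.mem_filter.1 hE).imp_left hP.mem_faces.1
      rw [hgr.sum_faces_quotient_eq hP (fun M hM hEM => hQ M hM (hF'E.trans hEM)) hE
        (isFace_polyJoin hP hE.subset hF.subset) subset_polyJoin_left hG
        ((polyJoin_subset_iff hG).2 ⟨hEG, hFG⟩)]
  _ = g G := hgr.sum_faces_face_eq hP hQ hG hF' (hle.trans hFG)

end Relations

/-- For any convex polytope `P` and faces `F′ ≤ F` of `P`,
`g(P,F) = ∑_{F′ ≤ E ≤ P} g(E,F′)·g(P/E, (E∨F)/E)`, where `(E∨F)/E` is the face of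
the quotient polytope `P/E` corresponding to `E ∨ F` under the isomorphism of its
face poset with the interval `[E,P]`. -/
theorem relative_g_decomposition {d : ℕ} (g h : Set (Fin d → ℝ) → Polynomial ℤ)
    (gr : Set (Fin d → ℝ) → Set (Fin d → ℝ) → Polynomial ℤ)
    (hGH : IsGH g h) (hgr : IsRelG g gr)
    (P F F' : Set (Fin d → ℝ)) (hP : IsPolytope P)
    (hF : IsFace P F) (hF' : IsFace P F') (hle : F' ⊆ F)
    (Q : Set (Fin d → ℝ) → Set (Fin d → ℝ))
    (ψ : Set (Fin d → ℝ) → Set (Fin d → ℝ) → Set (Fin d → ℝ))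
    (hQ : ∀ E, IsFace P E → F' ⊆ E → IsQuotientPair P E (Q E) (ψ E)) :
    gr P F = ∑ᶠ E ∈ {E : Set (Fin d → ℝ) | IsFace P E ∧ F' ⊆ E},
      gr E F' * gr (Q E) (ψ E (polyJoin P E F)) := by
  have hQF : ∀ E, IsFace P E → F ⊆ E → IsQuotientPair P E (Q E) (ψ E) :=
    fun E hE hFE => hQ E hE (hle.trans hFE)
  have hunique := Finset.eq_of_sum_mul_unitriangular_eq (s := hP.faces.filter (F ⊆ ·))
    (a := fun G => gr G F)
    (b := fun G => ∑ E ∈ hP.faces with F' ⊆ E ∧ E ⊆ G,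
      gr E F' * gr (ψ E G) (ψ E (polyJoin P E F)))
    (fun G' G => g (ψ G' G))
    (fun G hG => by
      obtain ⟨hG, hFG⟩ := (Finset.mem_filter.1 hG).imp_left hP.mem_faces.1
      rw [(hQF G hG hFG).map_self hG, hGH.1])
    (fun G hG => by
      obtain ⟨hG, hFG⟩ := (Finset.mem_filter.1 hG).imp_left hP.mem_faces.1
      rw [Finset.filter_filter, hgr.sum_faces_face_eq hP hQF hG hF hFG,
        hgr.sum_decomposition_mul_eq hP hQ hF hF' hle hG hFG])
    P (Finset.mem_filter.2 ⟨hP.mem_faces.2 (isFace_self P), hF.subset⟩)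
  rw [hunique, hP.finsum_mem_eq_sum_faces (s := {E | IsFace P E ∧ F' ⊆ E})
    (p := (F' ⊆ ·)) fun K => Iff.rfl]
  refine Finset.sum_congr (Finset.filter_congr fun E hE => ?_) fun E hE => ?_
  · exact and_iff_left (hP.mem_faces.1 hE).subset
  · obtain ⟨hE, hF'E⟩ := (Finset.mem_filter.1 hE).imp_left hP.mem_faces.1
    rw [(hQ E hE hF'E).map_top hE.subset]

end
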